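/- Fix a constant 0<α<1/100 and an integer k≥0. There exists a constant C depending only on α and k such that for all T≥2 and all real t, |W^{(k)}(t)| ≤ C·(T^{−1+α})^{k}, where W^{(k)} denotes the k-th derivative of W. -/

import Mathlib

/-!
Write `W(t) = (1 - φ (t / A)) (1 - φ (q t))` with `φ = expNegPow (2m)`, `A = (2T)^(1-α/2)`,
`q t = (4T² - t²) / (4S)`, `S = T^(2-α/2)`, and put `a = T^(-1+α)`. Every derivative of `φ` is
a polynomial times `φ`, so it decays faster than any power of `1 + u²`. The first factor then
has `i`-th derivative `O(A⁻ⁱ) = O(aⁱ)`. For the second, Faà di Bruno bounds the `i`-th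
derivative by `(D / (1 + q t ²))ⁱ` with `D = max |q' t| a`, and this ratio is `O(a)`: where
`|q' t|` is large, `|t| ≥ 3T`, so `|q t| ≳ t² / S` is large as well. Leibniz' rule combines
the two factors.
-/

open Real Polynomial Nat

noncomputable def Wwt (α T t : ℝ) : ℝ :=
  (1 - Real.exp (-(t / (2 * T) ^ (1 - α / 2)) ^ (2 * ⌈(1000 : ℝ) / α⌉₊))) *
    (1 - Real.exp (-((4 * T ^ 2 - t ^ 2) / (4 * T ^ (2 - α / 2))) ^ (2 * ⌈(1000 : ℝ) / α⌉₊)))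

noncomputable def expNegPow (n : ℕ) (u : ℝ) : ℝ := exp (-u ^ n)

@[fun_prop]
theorem contDiff_expNegPow (n : ℕ) {N : WithTop ℕ∞} : ContDiff ℝ N (expNegPow n) :=
  contDiff_exp.comp (contDiff_id.pow n).neg

theorem expNegPow_nonneg (n : ℕ) (u : ℝ) : 0 ≤ expNegPow n u := (exp_pos _).le

theorem expNegPow_two_mul_le_one (m : ℕ) (u : ℝ) : expNegPow (2 * m) u ≤ 1 :=
  exp_le_one_iff.mpr (neg_nonpos.mpr ((even_two_mul m).pow_nonneg u))

theorem hasDerivAt_expNegPow (n : ℕ) (u : ℝ) :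
    HasDerivAt (expNegPow n) (-(n * u ^ (n - 1)) * expNegPow n u) u := by
  rw [mul_comm]
  exact (hasDerivAt_pow n u).neg.exp

theorem exists_iteratedDeriv_expNegPow_eq (n i : ℕ) :
    ∃ P : ℝ[X], ∀ u, iteratedDeriv i (expNegPow n) u = P.eval u * expNegPow n u := by
  induction i with
  | zero => exact ⟨1, by simp⟩
  | succ i ih =>
    obtain ⟨P, hP⟩ := ih
    refine ⟨derivative P - C (n : ℝ) * X ^ (n - 1) * P, fun u => ?_⟩
    have hderiv : HasDerivAt (fun u => P.eval u * expNegPow n u)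
        (P.derivative.eval u * expNegPow n u + P.eval u * (-(n * u ^ (n - 1)) * expNegPow n u)) u :=
      (P.hasDerivAt u).mul (hasDerivAt_expNegPow n u)
    rw [iteratedDeriv_succ, funext hP, hderiv.deriv]
    simp only [eval_sub, eval_mul, eval_C, eval_pow, eval_X]
    ring

theorem Polynomial.exists_abs_eval_le (P : ℝ[X]) :
    ∃ C, 0 ≤ C ∧ ∀ u : ℝ, |P.eval u| ≤ C * (1 + u ^ 2) ^ P.natDegree := by
  refine ⟨∑ i ∈ Finset.range (P.natDegree + 1), |P.coeff i|, by positivity, fun u => ?_⟩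
  have hu : |u| ≤ 1 + u ^ 2 := by nlinarith [sq_nonneg (|u| - 1), sq_abs u]
  rw [eval_eq_sum_range, Finset.sum_mul]
  refine (Finset.abs_sum_le_sum_abs _ _).trans (Finset.sum_le_sum fun i hi => ?_)
  rw [abs_mul, abs_pow]
  gcongr
  calc |u| ^ i ≤ (1 + u ^ 2) ^ i := by gcongr
    _ ≤ (1 + u ^ 2) ^ P.natDegree :=
      pow_le_pow_right₀ (by nlinarith) (Nat.lt_succ_iff.mp (Finset.mem_range.mp hi))

/-- Comparing `u ^ (2m)` with `u² - 1` reduces to the Gaussian, and `x ^ q ≤ q! eˣ`. -/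
theorem one_add_sq_pow_mul_expNegPow_le {m : ℕ} (hm : m ≠ 0) (q : ℕ) (u : ℝ) :
    (1 + u ^ 2) ^ q * expNegPow (2 * m) u ≤ q ! * exp 2 := by
  have hpow : u ^ 2 - 1 ≤ u ^ (2 * m) := by
    rw [pow_mul]
    rcases le_total (u ^ 2) 1 with h | h
    · nlinarith [pow_nonneg (sq_nonneg u) m]
    · linarith [le_self_pow₀ h hm]
  have hq : (1 + u ^ 2) ^ q ≤ q ! * exp (1 + u ^ 2) := by
    have := pow_div_factorial_le_exp (x := 1 + u ^ 2) (by positivity) q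
    rwa [div_le_iff₀ (by positivity), mul_comm] at this
  calc (1 + u ^ 2) ^ q * expNegPow (2 * m) u ≤ (q ! * exp (1 + u ^ 2)) * exp (1 - u ^ 2) :=
        mul_le_mul hq (exp_le_exp.mpr (by linarith)) (expNegPow_nonneg _ _) (by positivity)
    _ = q ! * exp 2 := by rw [mul_assoc, ← exp_add]; ring_nf

theorem exists_bound_iteratedDeriv_expNegPow {m : ℕ} (hm : m ≠ 0) (i p : ℕ) :
    ∃ K, ∀ u, |iteratedDeriv i (expNegPow (2 * m)) u| * (1 + u ^ 2) ^ p ≤ K := by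
  obtain ⟨P, hP⟩ := exists_iteratedDeriv_expNegPow_eq (2 * m) i
  obtain ⟨C, hC0, hC⟩ := P.exists_abs_eval_le
  refine ⟨C * ((P.natDegree + p) ! * exp 2), fun u => ?_⟩
  calc |iteratedDeriv i (expNegPow (2 * m)) u| * (1 + u ^ 2) ^ p
      ≤ C * (1 + u ^ 2) ^ P.natDegree * expNegPow (2 * m) u * (1 + u ^ 2) ^ p := by
        rw [hP, abs_mul, abs_of_nonneg (expNegPow_nonneg _ _)]
        gcongr
        exacts [expNegPow_nonneg _ _, hC u]
    _ = C * ((1 + u ^ 2) ^ (P.natDegree + p) * expNegPow (2 * m) u) := by ring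
    _ ≤ C * ((P.natDegree + p) ! * exp 2) :=
        mul_le_mul_of_nonneg_left (one_add_sq_pow_mul_expNegPow_le hm _ u) hC0

theorem exists_uniform_bound_iteratedDeriv_expNegPow {m : ℕ} (hm : m ≠ 0) (k : ℕ) :
    ∃ K, ∀ i ≤ k, ∀ p ≤ k, ∀ u,
      |iteratedDeriv i (expNegPow (2 * m)) u| * (1 + u ^ 2) ^ p ≤ K := by
  choose K hK using fun i => exists_bound_iteratedDeriv_expNegPow hm i k
  have hK0 (i : ℕ) : 0 ≤ K i := (by positivity : (0 : ℝ) ≤ _).trans (hK i 0)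
  refine ⟨∑ i ∈ Finset.range (k + 1), K i, fun i hi p hp u => ?_⟩
  calc |iteratedDeriv i (expNegPow (2 * m)) u| * (1 + u ^ 2) ^ p
      ≤ |iteratedDeriv i (expNegPow (2 * m)) u| * (1 + u ^ 2) ^ k := by
        gcongr
        nlinarith [sq_nonneg u]
    _ ≤ K i := hK i u
    _ ≤ ∑ i ∈ Finset.range (k + 1), K i :=
        Finset.single_le_sum (fun j _ => hK0 j) (Finset.mem_range.mpr (Nat.lt_succ_of_le hi))

theorem abs_iteratedDeriv_mul_le {f g : ℝ → ℝ} {k : ℕ} (hf : ContDiff ℝ k f)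
    (hg : ContDiff ℝ k g) {x a C₁ C₂ : ℝ}
    (hf' : ∀ i ≤ k, |iteratedDeriv i f x| ≤ C₁ * a ^ i)
    (hg' : ∀ i ≤ k, |iteratedDeriv i g x| ≤ C₂ * a ^ i) :
    |iteratedDeriv k (fun y => f y * g y) x| ≤ C₁ * C₂ * (2 * a) ^ k := by
  rw [iteratedDeriv_fun_mul hf.contDiffAt hg.contDiffAt]
  calc _ ≤ ∑ i ∈ Finset.range (k + 1),
          |(k.choose i : ℝ) * iteratedDeriv i f x * iteratedDeriv (k - i) g x| :=
        Finset.abs_sum_le_sum_abs _ _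
    _ ≤ ∑ i ∈ Finset.range (k + 1), (k.choose i : ℝ) * (C₁ * C₂ * a ^ k) := by
        refine Finset.sum_le_sum fun i hi => ?_
        have hik : i ≤ k := Nat.lt_succ_iff.mp (Finset.mem_range.mp hi)
        have hf_i := hf' i hik
        have hpow : a ^ i * a ^ (k - i) = a ^ k := by rw [← pow_add, Nat.add_sub_cancel' hik]
        rw [abs_mul, abs_mul, Nat.abs_cast]
        calc _ ≤ (k.choose i : ℝ) * (C₁ * a ^ i) * (C₂ * a ^ (k - i)) :=
              mul_le_mul (by gcongr) (hg' (k - i) (Nat.sub_le k i)) (abs_nonneg _)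
                (mul_nonneg (by positivity) ((abs_nonneg _).trans hf_i))
          _ = (k.choose i : ℝ) * (C₁ * C₂ * a ^ k) := by
              linear_combination ((k.choose i : ℝ) * C₁ * C₂) * hpow
    _ = C₁ * C₂ * (2 * a) ^ k := by
        rw [← Finset.sum_mul, ← Nat.cast_sum, Nat.sum_range_choose, mul_pow]
        push_cast
        ring

theorem abs_iteratedDeriv_one_sub_le {g : ℝ → ℝ} {k : ℕ} {x a C : ℝ} (ha : 0 ≤ a)
    (hg₀ : 0 ≤ g x) (hg₁ : g x ≤ 1)
    (hg : ∀ i ≤ k, 0 < i → |iteratedDeriv i g x| ≤ C * a ^ i) :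
    ∀ i ≤ k, |iteratedDeriv i (fun y => 1 - g y) x| ≤ max 1 C * a ^ i := by
  intro i hi
  rcases Nat.eq_zero_or_pos i with rfl | hi₀
  · rw [iteratedDeriv_zero, pow_zero, mul_one]
    exact (abs_le.mpr ⟨by linarith, by linarith⟩).trans (le_max_left _ _)
  · rw [iteratedDeriv_const_sub hi₀, iteratedDeriv_neg, abs_neg]
    exact (hg i hi hi₀).trans (by gcongr; exact le_max_right _ _)

theorem abs_iteratedDeriv_sub_sq_div_le {c d x D : ℝ} (hd : 0 < d) (hx : 2 * |x| ≤ d * D)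
    (hD : 2 ≤ d * D ^ 2) {i : ℕ} (hi : 0 < i) :
    |iteratedDeriv i (fun y => (c - y ^ 2) / d) x| ≤ D ^ i := by
  have hD₀ : 0 ≤ D :=
    nonneg_of_mul_nonneg_right ((by positivity : (0 : ℝ) ≤ 2 * |x|).trans hx) hd
  rw [iteratedDeriv_div_const, iteratedDeriv_const_sub hi, iteratedDeriv_neg, iteratedDeriv_pow,
    abs_div, abs_neg, abs_of_pos hd, div_le_iff₀ hd]
  match i, hi with
  | 1, _ => simpa [abs_mul, mul_comm] using hx
  | 2, _ => simpa [mul_comm] using hD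
  | i + 3, _ =>
    rw [Nat.descFactorial_eq_zero_iff_lt.mpr (by omega), Nat.cast_zero, zero_mul, abs_zero]
    positivity

theorem abs_iteratedDeriv_comp_le {g q : ℝ → ℝ} {n : ℕ} (hg : ContDiff ℝ n g)
    (hq : ContDiff ℝ n q) {x K D : ℝ}
    (hgK : ∀ j ≤ n, |iteratedDeriv j g (q x)| * (1 + q x ^ 2) ^ n ≤ K)
    (hqD : ∀ j, 1 ≤ j → j ≤ n → |iteratedDeriv j q x| ≤ D ^ j) :
    |iteratedDeriv n (fun y => g (q y)) x| ≤ n ! * K * (D / (1 + q x ^ 2)) ^ n := by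
  have hpos : 0 < (1 + q x ^ 2) ^ n := by positivity
  have hcomp := norm_iteratedFDeriv_comp_le hg hq le_rfl x (C := K / (1 + q x ^ 2) ^ n)
    (fun j hj => by
      rw [norm_iteratedFDeriv_eq_norm_iteratedDeriv, norm_eq_abs, le_div_iff₀ hpos]
      exact hgK j hj)
    (fun j h₁ hj => by
      rw [norm_iteratedFDeriv_eq_norm_iteratedDeriv, norm_eq_abs]
      exact hqD j h₁ hj)
  rw [norm_iteratedFDeriv_eq_norm_iteratedDeriv, norm_eq_abs] at hcomp
  calc _ ≤ n ! * (K / (1 + q x ^ 2) ^ n) * D ^ n := hcomp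
    _ = n ! * K * (D / (1 + q x ^ 2)) ^ n := by rw [div_pow]; ring

theorem abs_div_le_mul_one_add_sq {T S a x : ℝ} (hS : 0 < S) (ha : 0 < a) (haT : 1 ≤ a * T)
    (haS : T ≤ a * S) :
    |x| / (2 * S) ≤ 2 * a * (1 + ((4 * T ^ 2 - x ^ 2) / (4 * S)) ^ 2) := by
  set y := (4 * T ^ 2 - x ^ 2) / (4 * S)
  have hT : 0 < T := pos_of_mul_pos_right (one_pos.trans_le haT) ha.le
  rcases le_total |x| (3 * T) with hx | hx
  · calc |x| / (2 * S) ≤ 3 * T / (2 * S) := by gcongr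
      _ ≤ 2 * a := by rw [div_le_iff₀ (by positivity)]; nlinarith
      _ ≤ 2 * a * (1 + y ^ 2) := le_mul_of_one_le_right (by positivity) (by nlinarith)
  · -- here `-y ≥ 5x² / (36S)` is large
    have hy : 5 * x ^ 2 ≤ 36 * S * (1 + y ^ 2) := by
      have hSy : 36 * S * y = 9 * (4 * T ^ 2 - x ^ 2) := by
        simp only [y]; field_simp; ring
      have hy₁ : 0 ≤ 1 + y + y ^ 2 := by nlinarith [sq_nonneg (y + 1 / 2)]
      nlinarith [mul_nonneg hS.le hy₁,
        sq_abs x, mul_le_mul hx hx (by positivity) (abs_nonneg x)]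
    rw [div_le_iff₀ (by positivity)]
    calc |x| ≤ 5 / 3 * (a * T) * |x| := by nlinarith [abs_nonneg x]
      _ ≤ 5 / 9 * a * (|x| * |x|) := by
        nlinarith [mul_le_mul_of_nonneg_left hx (by positivity : 0 ≤ a * |x|)]
      _ = 5 / 9 * a * x ^ 2 := by rw [← sq, sq_abs]
      _ ≤ 2 * a * (1 + y ^ 2) * (2 * S) := by nlinarith

section Factors

variable {m k : ℕ} {K : ℝ}

theorem abs_iteratedDeriv_one_sub_expNegPow_div_le
    (hK : ∀ i ≤ k, ∀ p ≤ k, ∀ u,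
      |iteratedDeriv i (expNegPow (2 * m)) u| * (1 + u ^ 2) ^ p ≤ K)
    {A a : ℝ} (hA : 0 < A) (ha : 0 ≤ a)
    (haA : 1 ≤ a * A) (t : ℝ) :
    ∀ i ≤ k,
      |iteratedDeriv i (fun t => 1 - expNegPow (2 * m) (t / A)) t| ≤ max 1 K * a ^ i := by
  refine abs_iteratedDeriv_one_sub_le (g := fun t => expNegPow (2 * m) (t / A)) ha
    (expNegPow_nonneg _ _) (expNegPow_two_mul_le_one _ _) fun i hi _ => ?_
  have hK₀ : ∀ u, |iteratedDeriv i (expNegPow (2 * m)) u| ≤ K := fun u => by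
    simpa using hK i hi 0 k.zero_le u
  have hAa : A⁻¹ ≤ a := by
    rw [inv_le_iff_one_le_mul₀ hA]
    linarith [mul_comm a A]
  simp_rw [div_eq_inv_mul]
  rw [iteratedDeriv_comp_const_mul (contDiff_expNegPow _) A⁻¹, abs_mul, abs_pow,
    abs_of_pos (inv_pos.2 hA), mul_comm]
  exact mul_le_mul (hK₀ _) (pow_le_pow_left₀ (by positivity) hAa i) (by positivity)
    ((abs_nonneg _).trans (hK₀ 0))

theorem abs_iteratedDeriv_one_sub_expNegPow_quadratic_le
    (hK : ∀ i ≤ k, ∀ p ≤ k, ∀ u,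
      |iteratedDeriv i (expNegPow (2 * m)) u| * (1 + u ^ 2) ^ p ≤ K)
    {T S a : ℝ} (hS : 0 < S) (ha : 0 < a)
    (haT : 1 ≤ a * T) (haS : T ≤ a * S) (t : ℝ) :
    ∀ i ≤ k,
      |iteratedDeriv i (fun t => 1 - expNegPow (2 * m) ((4 * T ^ 2 - t ^ 2) / (4 * S))) t|
      ≤ max 1 (k ! * K * 2 ^ k) * a ^ i := by
  refine abs_iteratedDeriv_one_sub_le
    (g := fun t => expNegPow (2 * m) ((4 * T ^ 2 - t ^ 2) / (4 * S)))
    ha.le (expNegPow_nonneg _ _) (expNegPow_two_mul_le_one _ _) fun i hi _ => ?_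
  set y := (4 * T ^ 2 - t ^ 2) / (4 * S)
  set D := max (|t| / (2 * S)) a
  have hK₀ : 0 ≤ K :=
    (mul_nonneg (abs_nonneg _) (by positivity)).trans (hK 0 k.zero_le 0 k.zero_le 0)
  have hDy : D / (1 + y ^ 2) ≤ 2 * a := by
    rw [div_le_iff₀ (by positivity)]
    exact max_le (abs_div_le_mul_one_add_sq hS ha haT haS) (by nlinarith [sq_nonneg y])
  have hgK : ∀ j ≤ i, |iteratedDeriv j (expNegPow (2 * m)) y| * (1 + y ^ 2) ^ i ≤ K :=
    fun j hj => (mul_le_mul_of_nonneg_left (pow_le_pow_right₀ (by nlinarith [sq_nonneg y]) hi)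
      (abs_nonneg _)).trans (hK j (hj.trans hi) k le_rfl y)
  have hqD : ∀ j, 1 ≤ j → j ≤ i →
      |iteratedDeriv j (fun t => (4 * T ^ 2 - t ^ 2) / (4 * S)) t| ≤ D ^ j := by
    intro j hj _
    have hxD : |t| / (2 * S) ≤ D := le_max_left _ _
    have haD : a ≤ D := le_max_right _ _
    refine abs_iteratedDeriv_sub_sq_div_le (by positivity) ?_ ?_ hj
    · rw [div_le_iff₀ (by positivity)] at hxD; linarith
    · nlinarith [mul_le_mul haD haD ha.le (ha.le.trans haD), mul_le_mul_of_nonneg_left haS ha.le]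
  calc _ ≤ i ! * K * (D / (1 + y ^ 2)) ^ i :=
        abs_iteratedDeriv_comp_le (g := expNegPow (2 * m))
          (q := fun t => (4 * T ^ 2 - t ^ 2) / (4 * S)) (contDiff_expNegPow _) (by fun_prop)
          hgK hqD
    _ ≤ k ! * K * (2 * a) ^ i := by gcongr
    _ ≤ k ! * K * 2 ^ k * a ^ i := by
        rw [mul_pow, ← mul_assoc]
        gcongr
        exact one_le_two

end Factors

theorem rpow_le_rpow_mul_rpow {T u r s : ℝ} (hT : 1 ≤ T) (h : u ≤ r + s) :
    T ^ u ≤ T ^ r * T ^ s := by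
  rw [← rpow_add (by linarith)]
  exact rpow_le_rpow_of_exponent_le hT h

/-- Derivative bounds W^{(k)}(t) ≪ (T^{-1+α})^k, uniformly in t ∈ ℝ. -/
theorem stmt_6 (α : ℝ) (hα0 : 0 < α) (hα1 : α < 1 / 100) (k : ℕ) :
    ∃ C : ℝ, ∀ T : ℝ, 2 ≤ T → ∀ t : ℝ,
      |iteratedDeriv k (Wwt α T) t| ≤ C * (T ^ (-1 + α)) ^ k := by
  obtain ⟨K, hK⟩ := exists_uniform_bound_iteratedDeriv_expNegPow
    (Nat.ceil_pos.mpr (by positivity) : 0 < ⌈(1000 : ℝ) / α⌉₊).ne' k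
  refine ⟨max 1 K * max 1 (k ! * K * 2 ^ k) * 2 ^ k, fun T hT t => ?_⟩
  have hT₁ : 1 ≤ T := by linarith
  set a := T ^ (-1 + α)
  have ha : 0 < a := by positivity
  have haA : 1 ≤ a * (2 * T) ^ (1 - α / 2) := by
    have := rpow_le_rpow_mul_rpow hT₁ (u := 0) (r := -1 + α) (s := 1 - α / 2) (by linarith)
    rw [rpow_zero] at this
    exact this.trans (by gcongr <;> linarith)
  have haT : 1 ≤ a * T := by
    simpa using rpow_le_rpow_mul_rpow hT₁ (u := 0) (r := -1 + α) (s := 1) (by linarith)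
  have haS : T ≤ a * T ^ (2 - α / 2) := by
    simpa using rpow_le_rpow_mul_rpow hT₁ (u := 1) (r := -1 + α) (s := 2 - α / 2) (by linarith)
  calc |iteratedDeriv k (Wwt α T) t|
      ≤ max 1 K * max 1 (k ! * K * 2 ^ k) * (2 * a) ^ k :=
        abs_iteratedDeriv_mul_le (by fun_prop) (by fun_prop)
          (abs_iteratedDeriv_one_sub_expNegPow_div_le hK (by positivity) ha.le haA t)
          (abs_iteratedDeriv_one_sub_expNegPow_quadratic_le hK (by positivity) ha haT haS t)
    _ = max 1 K * max 1 (k ! * K * 2 ^ k) * 2 ^ k * a ^ k := by ring
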